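/- Let X be a symmetric solution of CGDARE(Σ). Then, as an identity of polynomials in z, det(N − z M) = (−1)^n · det(A_X − z I_n) · det(I_n − z A_Xᵀ) · det R_X. -/

import Mathlib

open Matrix

-- The Moore–Penrose pseudoinverse of a real matrix, characterised by the four
-- Penrose equations (it exists and is unique for every real matrix).
open Classical in
noncomputable def mpinv {α β : Type*} [Fintype α] [Fintype β]
    (M : Matrix α β ℝ) : Matrix β α ℝ :=
  if h : ∃ P : Matrix β α ℝ,
      M * P * M = M ∧ P * M * P = P ∧ (M * P)ᵀ = M * P ∧ (P * M)ᵀ = P * M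
  then h.choose else 0

/-- `R_X = R + BᵀXB`. -/
noncomputable def RX {ι κ : Type*} [Fintype ι] [Fintype κ]
    (R : Matrix κ κ ℝ) (B : Matrix ι κ ℝ) (X : Matrix ι ι ℝ) : Matrix κ κ ℝ :=
  R + Bᵀ * X * B

/-- `S_X = AᵀXB + S`. -/
noncomputable def SX {ι κ : Type*} [Fintype ι] [Fintype κ]
    (A : Matrix ι ι ℝ) (B S : Matrix ι κ ℝ) (X : Matrix ι ι ℝ) : Matrix ι κ ℝ :=
  Aᵀ * X * B + S

/-- `K_X = R_X† S_Xᵀ`. -/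
noncomputable def KX {ι κ : Type*} [Fintype ι] [Fintype κ]
    (A : Matrix ι ι ℝ) (B S : Matrix ι κ ℝ) (R : Matrix κ κ ℝ) (X : Matrix ι ι ℝ) :
    Matrix κ ι ℝ :=
  mpinv (RX R B X) * (SX A B S X)ᵀ

/-- The closed-loop matrix `A_X = A - B K_X`. -/
noncomputable def AX {ι κ : Type*} [Fintype ι] [Fintype κ]
    (A : Matrix ι ι ℝ) (B S : Matrix ι κ ℝ) (R : Matrix κ κ ℝ) (X : Matrix ι ι ℝ) :
    Matrix ι ι ℝ :=
  A - B * KX A B S R X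

/-- The kernel condition `ker R_X ⊆ ker S_X`. -/
def KerCond {ι κ : Type*} [Fintype ι] [Fintype κ]
    (A : Matrix ι ι ℝ) (B S : Matrix ι κ ℝ) (R : Matrix κ κ ℝ) (X : Matrix ι ι ℝ) : Prop :=
  ∀ v : κ → ℝ, (RX R B X).mulVec v = 0 → (SX A B S X).mulVec v = 0

/-- The Riccati operator `𝔇(X) = X - AᵀXA + S_X R_X† S_Xᵀ - Q`. -/
noncomputable def DOp {ι κ : Type*} [Fintype ι] [Fintype κ]
    (A Q : Matrix ι ι ℝ) (B S : Matrix ι κ ℝ) (R : Matrix κ κ ℝ) (X : Matrix ι ι ℝ) :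
    Matrix ι ι ℝ :=
  X - Aᵀ * X * A + SX A B S X * mpinv (RX R B X) * (SX A B S X)ᵀ - Q

/-- The Riccati map `ℛ(X) = AᵀXA - S_X R_X† S_Xᵀ + Q`. -/
noncomputable def Ricc {ι κ : Type*} [Fintype ι] [Fintype κ]
    (A Q : Matrix ι ι ℝ) (B S : Matrix ι κ ℝ) (R : Matrix κ κ ℝ) (X : Matrix ι ι ℝ) :
    Matrix ι ι ℝ :=
  Aᵀ * X * A - SX A B S X * mpinv (RX R B X) * (SX A B S X)ᵀ + Q

/-- `X` is a symmetric solution of CGDARE(Σ): it is symmetric, satisfies the GDARE and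
the kernel condition `ker R_X ⊆ ker S_X`. -/
def IsCGDARESolution {ι κ : Type*} [Fintype ι] [Fintype κ]
    (A Q : Matrix ι ι ℝ) (B S : Matrix ι κ ℝ) (R : Matrix κ κ ℝ) (X : Matrix ι ι ℝ) : Prop :=
  Xᵀ = X ∧ X = Ricc A Q B S R X ∧ KerCond A B S R X

/-- The matrix `N = [[A, 0, B], [Q, -I, S], [Sᵀ, 0, R]]` of the extended symplectic pencil. -/
noncomputable def Nmat {n m : ℕ} (A Q : Matrix (Fin n) (Fin n) ℝ)
    (B S : Matrix (Fin n) (Fin m) ℝ) (R : Matrix (Fin m) (Fin m) ℝ) :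
    Matrix (Fin n ⊕ (Fin n ⊕ Fin m)) (Fin n ⊕ (Fin n ⊕ Fin m)) ℝ :=
  fromBlocks A (fromCols 0 B) (fromRows Q Sᵀ) (fromBlocks (-1) S 0 R)

/-- The matrix `M = [[I, 0, 0], [0, -Aᵀ, 0], [0, -Bᵀ, 0]]` of the extended symplectic pencil. -/
noncomputable def Mmat {n m : ℕ} (A : Matrix (Fin n) (Fin n) ℝ)
    (B : Matrix (Fin n) (Fin m) ℝ) :
    Matrix (Fin n ⊕ (Fin n ⊕ Fin m)) (Fin n ⊕ (Fin n ⊕ Fin m)) ℝ :=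
  fromBlocks 1 0 0 (fromBlocks (-Aᵀ) 0 (-Bᵀ) 0)

/-!
Since `R_X` is symmetric, `R_X R_X† R_X = R_X`, and the kernel condition `ker R_X ⊆ ker S_X` then
gives `R_X K_X = S_Xᵀ`; the Riccati equation reads `Q = X - AᵀXA + S_X K_X`. With these two
identities the unimodular matrices `U = [[I, 0, 0], [A_XᵀX, I, -K_Xᵀ], [BᵀX, 0, I]]` and
`V = [[I, 0, 0], [X, I, 0], [-K_X, 0, I]]` bring the pencil to the block triangular form
`U (N - zM) V = [[A_X - zI, 0, B], [0, zA_Xᵀ - I, 0], [0, zBᵀ, R_X]]`, whose determinant is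
`det (A_X - zI) · (-1)^n det (I - zA_Xᵀ) · det R_X`.
-/

theorem exists_penrose_of_transpose_eq {ι : Type*} [Fintype ι] (M : Matrix ι ι ℝ)
    (hM : Mᵀ = M) :
    ∃ P : Matrix ι ι ℝ,
      M * P * M = M ∧ P * M * P = P ∧ (M * P)ᵀ = M * P ∧ (P * M)ᵀ = P * M := by
  classical
  have hM : IsSelfAdjoint M := by
    rwa [IsSelfAdjoint, star_eq_conjTranspose, conjTranspose_eq_transpose_of_trivial]
  have hmul (f g : ℝ → ℝ) : cfc f M * cfc g M = cfc (fun x => f x * g x) M :=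
    (cfc_mul f g M (finite_real_spectrum.continuousOn f)
      (finite_real_spectrum.continuousOn g)).symm
  have hsymm (f : ℝ → ℝ) : (cfc f M)ᵀ = cfc f M := by
    rw [← conjTranspose_eq_transpose_of_trivial, ← star_eq_conjTranspose]
    exact cfc_predicate f M
  have hinv (x : ℝ) : x⁻¹ * x * x⁻¹ = x⁻¹ := by simpa using mul_inv_mul_cancel x⁻¹
  rw [← cfc_id' ℝ M]
  -- Since `0⁻¹ = 0`, the identities `x * x⁻¹ * x = x` and `x⁻¹ * x * x⁻¹ = x⁻¹` hold for all `x`.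
  refine ⟨cfc (·⁻¹ : ℝ → ℝ) M, ?_, ?_, ?_, ?_⟩ <;>
    simp only [hmul, hsymm, mul_inv_mul_cancel, hinv]

theorem mul_mpinv_mul_of_transpose_eq {ι : Type*} [Fintype ι] {M : Matrix ι ι ℝ}
    (hM : Mᵀ = M) : M * mpinv M * M = M := by
  have h := exists_penrose_of_transpose_eq M hM
  rw [mpinv, dif_pos h]
  exact h.choose_spec.1

theorem mul_eq_zero_of_ker_le {ι κ μ ν α : Type*} [Fintype κ] [NonUnitalNonAssocSemiring α]
    {A : Matrix μ κ α} {B : Matrix ι κ α} {N : Matrix κ ν α}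
    (hker : ∀ v, A *ᵥ v = 0 → B *ᵥ v = 0) (hAN : A * N = 0) : B * N = 0 := by
  ext i j
  exact congrFun (hker (fun k => N k j) (funext fun r => congrFun (congrFun hAN r) j)) i

theorem mul_mul_transpose_eq_of_ker_le {ι κ α : Type*} [Fintype κ] [CommRing α]
    {R G : Matrix κ κ α} {S : Matrix ι κ α} (hR : Rᵀ = R) (hG : R * G * R = R)
    (hker : ∀ v, R *ᵥ v = 0 → S *ᵥ v = 0) : R * G * Sᵀ = Sᵀ := by
  classical
  have hRGR : R * (1 - G * R) = 0 := by rw [Matrix.mul_sub, ← Matrix.mul_assoc, hG]; simp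
  have hSGR : S * G * R = S := by
    have h := mul_eq_zero_of_ker_le hker hRGR
    rwa [Matrix.mul_sub, Matrix.mul_one, sub_eq_zero, eq_comm, ← Matrix.mul_assoc] at h
  have hT : R * Gᵀ * Sᵀ = Sᵀ := by
    simpa only [transpose_mul, hR, Matrix.mul_assoc] using congrArg transpose hSGR
  calc R * G * Sᵀ = R * G * (R * Gᵀ * Sᵀ) := by rw [hT]
    _ = R * G * R * Gᵀ * Sᵀ := by simp only [Matrix.mul_assoc]
    _ = Sᵀ := by rw [hG, hT]

theorem transpose_RX {ι κ : Type*} [Fintype ι] [Fintype κ] {R : Matrix κ κ ℝ}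
    {B : Matrix ι κ ℝ} {X : Matrix ι ι ℝ} (hR : Rᵀ = R) (hX : Xᵀ = X) :
    (RX R B X)ᵀ = RX R B X := by
  rw [RX, transpose_add, transpose_mul, transpose_mul, transpose_transpose, hR, hX,
    Matrix.mul_assoc]

namespace IsCGDARESolution

variable {ι κ : Type*} [Fintype ι] [Fintype κ] {A Q X : Matrix ι ι ℝ} {B S : Matrix ι κ ℝ}
  {R : Matrix κ κ ℝ}

theorem RX_mul_KX (h : IsCGDARESolution A Q B S R X) (hR : Rᵀ = R) :
    RX R B X * KX A B S R X = (SX A B S X)ᵀ := by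
  have hsymm := transpose_RX (B := B) hR h.1
  rw [KX, ← Matrix.mul_assoc]
  exact mul_mul_transpose_eq_of_ker_le hsymm (mul_mpinv_mul_of_transpose_eq hsymm) h.2.2

theorem eq_sub_add_SX_mul_KX (h : IsCGDARESolution A Q B S R X) :
    Q = X - Aᵀ * X * A + SX A B S X * KX A B S R X := by
  nth_rw 1 [h.2.1]
  rw [Ricc, KX, Matrix.mul_assoc (SX A B S X)]
  abel

end IsCGDARESolution

section Blocks3

variable {α : Type*} {l m n l' m' n' l'' m'' n'' : Type*}

def blocks3 (a : Matrix l l' α) (b : Matrix l m' α) (c : Matrix l n' α)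
    (d : Matrix m l' α) (e : Matrix m m' α) (f : Matrix m n' α)
    (g : Matrix n l' α) (h : Matrix n m' α) (i : Matrix n n' α) :
    Matrix (l ⊕ (m ⊕ n)) (l' ⊕ (m' ⊕ n')) α :=
  fromBlocks a (fromCols b c) (fromRows d g) (fromBlocks e f h i)

theorem blocks3_mul_blocks3 [Fintype l'] [Fintype m'] [Fintype n'] [NonUnitalNonAssocSemiring α]
    (a : Matrix l l' α) (b : Matrix l m' α) (c : Matrix l n' α)
    (d : Matrix m l' α) (e : Matrix m m' α) (f : Matrix m n' α)
    (g : Matrix n l' α) (h : Matrix n m' α) (i : Matrix n n' α)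
    (a' : Matrix l' l'' α) (b' : Matrix l' m'' α) (c' : Matrix l' n'' α)
    (d' : Matrix m' l'' α) (e' : Matrix m' m'' α) (f' : Matrix m' n'' α)
    (g' : Matrix n' l'' α) (h' : Matrix n' m'' α) (i' : Matrix n' n'' α) :
    blocks3 a b c d e f g h i * blocks3 a' b' c' d' e' f' g' h' i' =
      blocks3 (a * a' + b * d' + c * g') (a * b' + b * e' + c * h') (a * c' + b * f' + c * i')
        (d * a' + e * d' + f * g') (d * b' + e * e' + f * h') (d * c' + e * f' + f * i')
        (g * a' + h * d' + i * g') (g * b' + h * e' + i * h') (g * c' + h * f' + i * i') := by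
  ext (r | r | r) (s | s | s) <;>
    simp [blocks3, Matrix.mul_apply, Fintype.sum_sum_type, add_assoc]

theorem blocks3_sub [AddGroup α]
    (a a' : Matrix l l' α) (b b' : Matrix l m' α) (c c' : Matrix l n' α)
    (d d' : Matrix m l' α) (e e' : Matrix m m' α) (f f' : Matrix m n' α)
    (g g' : Matrix n l' α) (h h' : Matrix n m' α) (i i' : Matrix n n' α) :
    blocks3 a b c d e f g h i - blocks3 a' b' c' d' e' f' g' h' i' =
      blocks3 (a - a') (b - b') (c - c') (d - d') (e - e') (f - f') (g - g') (h - h')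
        (i - i') := by
  ext (r | r | r) (s | s | s) <;> rfl

theorem smul_blocks3 {R : Type*} [SMul R α] (z : R)
    (a : Matrix l l' α) (b : Matrix l m' α) (c : Matrix l n' α)
    (d : Matrix m l' α) (e : Matrix m m' α) (f : Matrix m n' α)
    (g : Matrix n l' α) (h : Matrix n m' α) (i : Matrix n n' α) :
    z • blocks3 a b c d e f g h i =
      blocks3 (z • a) (z • b) (z • c) (z • d) (z • e) (z • f) (z • g) (z • h) (z • i) := by
  ext (r | r | r) (s | s | s) <;> rfl

variable [Fintype l] [Fintype m] [Fintype n] [DecidableEq l] [DecidableEq m] [DecidableEq n]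
  [CommRing α]

theorem det_blocks3_of_eq_zero (a : Matrix l l α) (b : Matrix l m α) (c : Matrix l n α)
    (e : Matrix m m α) (h : Matrix n m α) (i : Matrix n n α) :
    (blocks3 a b c 0 e 0 0 h i).det = a.det * e.det * i.det := by
  rw [blocks3, fromRows_zero, det_fromBlocks_zero₂₁, det_fromBlocks_zero₁₂, mul_assoc]

theorem det_blocks3_one (d : Matrix m l α) (f : Matrix m n α) (g : Matrix n l α) :
    (blocks3 1 0 0 d 1 f g 0 1).det = 1 := by
  rw [blocks3, fromCols_zero, det_fromBlocks_zero₁₂, det_fromBlocks_zero₂₁]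
  simp

end Blocks3

theorem blocks3_pencil_eq_triangular {ι κ α : Type*} [Fintype ι] [Fintype κ] [DecidableEq ι]
    [DecidableEq κ] [CommRing α] (A X : Matrix ι ι α) (B : Matrix ι κ α) (K : Matrix κ ι α)
    (Sx : Matrix ι κ α) (Rx : Matrix κ κ α) (hRK : Rx * K = Sxᵀ) (hKR : Kᵀ * Rx = Sx) (z : α) :
    blocks3 1 0 0 ((A - B * K)ᵀ * X) 1 (-Kᵀ) (Bᵀ * X) 0 1 *
        blocks3 (A - z • 1) 0 B (X - Aᵀ * X * A + Sx * K) (z • Aᵀ - 1) (Sx - Aᵀ * X * B)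
          (Sxᵀ - Bᵀ * X * A) (z • Bᵀ) (Rx - Bᵀ * X * B) *
        blocks3 1 0 0 X 1 0 (-K) 0 1 =
      blocks3 (A - B * K - z • 1) 0 B 0 (z • (A - B * K)ᵀ - 1) 0 0 (z • Bᵀ) Rx := by
  have hSK : Sx * K = Kᵀ * Sxᵀ := by rw [← hRK, ← Matrix.mul_assoc, hKR]
  rw [blocks3_mul_blocks3, blocks3_mul_blocks3]
  congr 1 <;>
    simp only [Matrix.mul_smul, Matrix.smul_mul, Matrix.mul_add, Matrix.add_mul,
      Matrix.mul_sub, Matrix.sub_mul, Matrix.mul_neg, Matrix.neg_mul, Matrix.mul_zero,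
      Matrix.zero_mul, Matrix.mul_one, Matrix.one_mul, Matrix.mul_assoc, transpose_sub,
      transpose_mul, smul_sub, smul_neg, smul_zero, sub_zero, zero_add, add_zero, hRK, hKR,
      hSK] <;>
    abel

theorem Nmat_sub_smul_Mmat {n m : ℕ} (A Q : Matrix (Fin n) (Fin n) ℝ)
    (B S : Matrix (Fin n) (Fin m) ℝ) (R : Matrix (Fin m) (Fin m) ℝ) (z : ℝ) :
    Nmat A Q B S R - z • Mmat A B =
      blocks3 (A - z • 1) 0 B Q (z • Aᵀ - 1) S Sᵀ (z • Bᵀ) R := by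
  have hM : Mmat A B = blocks3 1 0 0 0 (-Aᵀ) 0 0 (-Bᵀ) 0 := by
    rw [Mmat, blocks3, fromCols_zero, fromRows_zero]
  rw [hM, Nmat, ← blocks3, smul_blocks3, blocks3_sub]
  congr 1 <;>
    simp only [smul_zero, smul_neg, sub_zero, sub_neg_eq_add, neg_add_eq_sub, zero_add]

theorem det_Nmat_sub_smul_Mmat {n m : ℕ} (A Q X : Matrix (Fin n) (Fin n) ℝ)
    (B S : Matrix (Fin n) (Fin m) ℝ) (R : Matrix (Fin m) (Fin m) ℝ)
    (K : Matrix (Fin m) (Fin n) ℝ) (hX : Xᵀ = X) (hR : Rᵀ = R)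
    (hQ : Q = X - Aᵀ * X * A + SX A B S X * K)
    (hRK : RX R B X * K = (SX A B S X)ᵀ) (z : ℝ) :
    (Nmat A Q B S R - z • Mmat A B).det =
      (-1 : ℝ) ^ n * (A - B * K - z • 1).det * (1 - z • (A - B * K)ᵀ).det * (RX R B X).det := by
  have hKR : Kᵀ * RX R B X = SX A B S X := by
    rw [← transpose_RX (B := B) hR hX, ← transpose_mul, hRK, transpose_transpose]
  have hpencil : Nmat A Q B S R - z • Mmat A B =
      blocks3 (A - z • 1) 0 B (X - Aᵀ * X * A + SX A B S X * K) (z • Aᵀ - 1)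
        (SX A B S X - Aᵀ * X * B) ((SX A B S X)ᵀ - Bᵀ * X * A) (z • Bᵀ)
        (RX R B X - Bᵀ * X * B) := by
    rw [Nmat_sub_smul_Mmat, hQ, SX, RX, transpose_add, transpose_mul, transpose_mul, hX]
    congr 1 <;>
      simp only [transpose_transpose, Matrix.mul_assoc, add_sub_cancel_left, add_sub_cancel_right]
  have h := congrArg det (blocks3_pencil_eq_triangular A X B K _ _ hRK hKR z)
  have hneg : z • (A - B * K)ᵀ - 1 = -(1 - z • (A - B * K)ᵀ) := (neg_sub _ _).symm
  rw [det_mul, det_mul, det_blocks3_one, det_blocks3_one, det_blocks3_of_eq_zero, ← hpencil,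
    hneg, det_neg, Fintype.card_fin] at h
  linear_combination h

theorem stmt_3_general {n m : ℕ}
    (A Q : Matrix (Fin n) (Fin n) ℝ) (B S : Matrix (Fin n) (Fin m) ℝ)
    (R : Matrix (Fin m) (Fin m) ℝ)
    (hPi : (fromBlocks Q S Sᵀ R).PosSemidef)
    (X : Matrix (Fin n) (Fin n) ℝ) (hX : IsCGDARESolution A Q B S R X) :
    ∀ z : ℝ,
      (Nmat A Q B S R - z • Mmat A B).det =
        (-1 : ℝ) ^ n * (AX A B S R X - z • (1 : Matrix (Fin n) (Fin n) ℝ)).det *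
          ((1 : Matrix (Fin n) (Fin n) ℝ) - z • (AX A B S R X)ᵀ).det * (RX R B X).det := by
  have hR : R.IsSymm := by
    simpa using (isHermitian_fromBlocks_iff.mp hPi.isHermitian).2.2.2
  exact det_Nmat_sub_smul_Mmat A Q X B S R _ hX.1 hR.eq hX.eq_sub_add_SX_mul_KX
    (hX.RX_mul_KX hR.eq)

/-- `det (N - z M) = (-1)^n det(A_X - z I) det(I - z A_Xᵀ) det R_X`
for every scalar `z` (hence as an identity of polynomials in `z`). -/
theorem stmt_3 {n m : ℕ} (hn : 0 < n) (hm : 0 < m)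
    (A Q : Matrix (Fin n) (Fin n) ℝ) (B S : Matrix (Fin n) (Fin m) ℝ)
    (R : Matrix (Fin m) (Fin m) ℝ)
    (hPi : (fromBlocks Q S Sᵀ R).PosSemidef)
    (X : Matrix (Fin n) (Fin n) ℝ) (hX : IsCGDARESolution A Q B S R X) :
    ∀ z : ℝ,
      (Nmat A Q B S R - z • Mmat A B).det =
        (-1 : ℝ) ^ n * (AX A B S R X - z • (1 : Matrix (Fin n) (Fin n) ℝ)).det *
          ((1 : Matrix (Fin n) (Fin n) ℝ) - z • (AX A B S R X)ᵀ).det * (RX R B X).det :=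
  stmt_3_general A Q B S R hPi X hX
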